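/- Let the integer-division variant ĥ satisfy ĥ_{k+1} = ⌊ĥ_k/2⌋ + n_k where n_k ∈ ℕ and ĥ_0 ∈ ℕ, and let h : ℕ → ℝ use the same increments, h_{k+1} = h_k/2 + n_k with h_0 = ĥ_0; then 0 ≤ h_k − ĥ_k ≤ 1 − 1/2^k for all k. -/
import Mathlib


theorem stmt_17 (h : ℕ → ℝ) (hhat : ℕ → ℕ) (n : ℕ → ℕ)
    (h0 : h 0 = (hhat 0 : ℝ))
    (hrec : ∀ k, h (k + 1) = h k / 2 + (n k : ℝ))
    (hhatrec : ∀ k, hhat (k + 1) = hhat k / 2 + n k) :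
    ∀ k, 0 ≤ h k - (hhat k : ℝ) ∧ h k - (hhat k : ℝ) ≤ 1 - 1 / 2 ^ k := by
  intro k
  induction k with
  | zero => simp [h0]
  | succ k ih =>
    obtain ⟨ih1, ih2⟩ := ih
    have hfl : ((hhat k / 2 : ℕ) : ℝ) ≤ (hhat k : ℝ) / 2 := by
      have := Nat.div_mul_le_self (hhat k) 2
      have : ((hhat k / 2 * 2 : ℕ) : ℝ) ≤ ((hhat k : ℕ) : ℝ) := by exact_mod_cast this
      push_cast at this
      linarith
    have hfl2 : (hhat k : ℝ) / 2 - ((hhat k / 2 : ℕ) : ℝ) ≤ 1 / 2 := by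
      have : hhat k ≤ hhat k / 2 * 2 + 1 := by omega
      have : ((hhat k : ℕ) : ℝ) ≤ ((hhat k / 2 * 2 + 1 : ℕ) : ℝ) := by exact_mod_cast this
      push_cast at this
      linarith
    rw [hrec, hhatrec]
    push_cast
    constructor
    · linarith
    · have : (1:ℝ)/2^(k+1) = (1/2^k)/2 := by ring
      rw [this]
      linarith
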